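/- There exists an advice string A such that the class of languages terminating regular with advice A differs from the class nonterminating regular with advice A: concretely, if A ∈ {0,1}^ω is chosen so that Pref(A) is not regular (without advice), then the unary language L = {0ⁿ : the (n+1)-st character of A is 1} is nonterminating regular with advice A but not terminating regular with advice A. -/

import Mathlib

open Classical

/-- The run of a (terminating) automaton with advice. -/
def advRun {Q S Γ : Type*} (δ : Q → Γ → S → Q) (A : ℕ → Γ) : Q → ℕ → List S → Q
  | q, _, [] => q
  | q, n, a :: w => advRun δ A (δ q (A n) a) (n + 1) w

/-- The language accepted by a terminating automaton with advice. -/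
def advAccepts {Q S Γ : Type*} (δ : Q → Γ → S → Q) (A : ℕ → Γ) (q0 : Q) (F : Set Q) :
    Set (List S) :=
  {w | advRun δ A q0 0 w ∈ F}

/-- The infinite run of a nonterminating automaton with advice on a finite word
`w`: after `w` ends, the automaton reads blanks (`none`) with the advice. -/
def ntRun {Q S Γ : Type*} (δ : Q → Γ → Option S → Q) (A : ℕ → Γ) (q0 : Q)
    (w : List S) : ℕ → Q
  | 0 => q0
  | n + 1 => δ (ntRun δ A q0 w n) (A n) w[n]?

/-- The language accepted by a nonterminating automaton with advice, via the
Muller condition `F ⊆ P(Q)` on the set of infinitely visited states. -/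
def ntAccepts {Q S Γ : Type*} (δ : Q → Γ → Option S → Q) (A : ℕ → Γ) (q0 : Q)
    (F : Set (Set Q)) : Set (List S) :=
  {w | {q | {n | ntRun δ A q0 w n = q}.Infinite} ∈ F}

/-- `L` is terminating regular with advice `A`. -/
def TermRegWith {S Γ : Type*} (A : ℕ → Γ) (L : Set (List S)) : Prop :=
  ∃ (Q : Type) (_ : Fintype Q) (δ : Q → Γ → S → Q) (q0 : Q) (F : Set Q),
    advAccepts δ A q0 F = L

/-- `L` is nonterminating regular with advice `A`. -/
def NontermRegWith {S Γ : Type*} (A : ℕ → Γ) (L : Set (List S)) : Prop :=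
  ∃ (Q : Type) (_ : Fintype Q) (δ : Q → Γ → Option S → Q) (q0 : Q) (F : Set (Set Q)),
    ntAccepts δ A q0 F = L

/-- The set of finite prefixes of the infinite string `A`. -/
def Pref {S : Type*} (A : ℕ → S) : Set (List S) :=
  {w | ∀ i : Fin w.length, w.get i = A i}

/-!
Advice strings `A` with `Pref A` non-regular exist because `Pref` is injective, `ℕ → Bool` is
uncountable, and there are only countably many regular languages.

A nonterminating automaton accepts `{w | A |w| = true}` by waiting for the first blank and then
remembering forever the advice bit read there. Conversely, on the unary word of length `n` a
terminating automaton for this language ends in an accepting state exactly when `A n = true`.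
Running it along a bit string and checking each input bit against this membership therefore gives
an ordinary DFA for `Pref A`.
-/

theorem mem_pref_iff {S : Type*} {A : ℕ → S} {w : List S} :
    w ∈ Pref A ↔ ∀ i (hi : i < w.length), w[i] = A i :=
  ⟨fun h i hi => h ⟨i, hi⟩, fun h i => h i i.2⟩

theorem append_singleton_mem_pref_iff {S : Type*} {A : ℕ → S} {w : List S} {a : S} :
    w ++ [a] ∈ Pref A ↔ w ∈ Pref A ∧ a = A w.length := by
  simp only [mem_pref_iff, List.length_append, List.length_singleton]
  constructor
  · intro h
    refine ⟨fun i hi => ?_, ?_⟩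
    · simpa [List.getElem_append_left hi] using h i (by omega)
    · simpa using h w.length (by omega)
  · rintro ⟨hw, ha⟩ i hi
    rcases Nat.lt_succ_iff_lt_or_eq.mp hi with hi | rfl
    · rw [List.getElem_append_left hi, hw i hi]
    · simpa using ha

theorem pref_injective {S : Type*} : Function.Injective (Pref : (ℕ → S) → Set (List S)) := by
  intro A B hAB
  funext n
  have hA : List.ofFn (fun i : Fin (n + 1) => A i) ∈ Pref A := fun i => by
    rw [List.get_ofFn]; rfl
  have hB : List.ofFn (fun i : Fin (n + 1) => A i) ∈ Pref B := hAB ▸ hA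
  have hn := hB ⟨n, by simp⟩
  rwa [List.get_ofFn] at hn

theorem Language.countable_setOf_isRegular {α : Type*} [Finite α] :
    {L : Language α | L.IsRegular}.Countable := by
  let dfaLanguage : (Σ n, (Fin n → α → Fin n) × Fin n × Set (Fin n)) → Language α :=
    fun M => (DFA.mk M.2.1 M.2.2.1 M.2.2.2).accepts
  refine (Set.countable_range dfaLanguage).mono ?_
  rintro L ⟨σ, _, M, rfl⟩
  let e := Fintype.equivFin σ
  exact ⟨⟨_, (M.reindex e).step, (M.reindex e).start, (M.reindex e).accept⟩,
    M.accepts_reindex e⟩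

theorem not_countable_nat_to_bool : ¬ Countable (ℕ → Bool) := by
  rw [← Cardinal.mk_le_aleph0_iff, ← Cardinal.power_def, Cardinal.mk_bool, Cardinal.mk_nat,
    not_le]
  exact Cardinal.cantor _

theorem exists_not_isRegular_pref : ∃ A : ℕ → Bool, ¬ Language.IsRegular (Pref A) := by
  by_contra! h
  have hmaps : Set.MapsTo Pref Set.univ {L : Language Bool | L.IsRegular} := fun A _ => h A
  exact not_countable_nat_to_bool <| Set.countable_univ_iff.mp <|
    hmaps.countable_of_injOn pref_injective.injOn Language.countable_setOf_isRegular

section AdvRun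

variable {Q S Γ : Type*} (δ : Q → Γ → S → Q) (A : ℕ → Γ)

theorem advRun_append (q : Q) (m : ℕ) (u v : List S) :
    advRun δ A q m (u ++ v) = advRun δ A (advRun δ A q m u) (m + u.length) v := by
  induction u generalizing q m with
  | nil => rfl
  | cons a u ih =>
    simp only [List.cons_append, advRun, ih, List.length_cons]
    congr 1
    omega

theorem advRun_replicate_succ (q : Q) (m n : ℕ) (s : S) :
    advRun δ A q m (List.replicate (n + 1) s) =
      δ (advRun δ A q m (List.replicate n s)) (A (m + n)) s := by
  rw [List.replicate_succ', advRun_append]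
  simp [advRun]

end AdvRun

/-- Along the unary run, membership of the current state in `F` is the next advice bit, so
comparing each input bit with it checks that the input is a prefix of the advice; `none` is a
rejecting sink. -/
noncomputable def prefDFA {Q S : Type*} (δ : Q → Bool → S → Q) (s : S) (q0 : Q) (F : Set Q) :
    DFA Bool (Option Q) where
  step o b := o.bind fun q => if b = decide (q ∈ F) then some (δ q b s) else none
  start := some q0
  accept := {o | o.isSome}

section PrefDFA

variable {Q S : Type*} {δ : Q → Bool → S → Q} {A : ℕ → Bool} {s : S} {q0 : Q} {F : Set Q}

theorem prefDFA_eval (hF : ∀ n, advRun δ A q0 0 (List.replicate n s) ∈ F ↔ A n = true)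
    (w : List Bool) :
    (prefDFA δ s q0 F).eval w =
      if w ∈ Pref A then some (advRun δ A q0 0 (List.replicate w.length s)) else none := by
  induction w using List.reverseRecOn with
  | nil => simp [mem_pref_iff, prefDFA, advRun]
  | append_singleton w b ih =>
    rw [DFA.eval_append_singleton, ih, append_singleton_mem_pref_iff]
    by_cases hw : w ∈ Pref A
    · have hA : decide (advRun δ A q0 0 (List.replicate w.length s) ∈ F) = A w.length := by
        rw [Bool.eq_iff_iff, decide_eq_true_iff]
        exact hF _
      by_cases hb : b = A w.length <;> simp [prefDFA, hw, hb, hA, advRun_replicate_succ]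
    · simp [prefDFA, hw]

theorem prefDFA_accepts (hF : ∀ n, advRun δ A q0 0 (List.replicate n s) ∈ F ↔ A n = true) :
    (prefDFA δ s q0 F).accepts = Pref A := by
  ext w
  rw [DFA.mem_accepts, prefDFA_eval hF]
  split_ifs with hw
  · exact iff_of_true rfl hw
  · exact iff_of_false Bool.false_ne_true hw

end PrefDFA

theorem isRegular_pref_of_termRegWith {S : Type*} [Nonempty S] {A : ℕ → Bool}
    (h : TermRegWith (S := S) A {w | A w.length = true}) : Language.IsRegular (Pref A) := by
  obtain ⟨Q, _, δ, q0, F, hL⟩ := h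
  let s := Classical.arbitrary S
  have hF (n : ℕ) : advRun δ A q0 0 (List.replicate n s) ∈ F ↔ A n = true := by
    simpa [advAccepts] using Set.ext_iff.mp hL (List.replicate n s)
  exact ⟨Option Q, inferInstance, _, prefDFA_accepts hF⟩

def recordAdviceAtBlank {S Γ : Type*} (p : Γ → Bool) :
    Option Bool → Γ → Option S → Option Bool
  | none, g, none => some (p g)
  | none, _, some _ => none
  | some b, _, _ => some b

section Nonterminating

variable {S Γ : Type*} (p : Γ → Bool) (A : ℕ → Γ) (w : List S)

theorem ntRun_recordAdviceAtBlank (n : ℕ) :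
    ntRun (recordAdviceAtBlank p) A none w n =
      if n ≤ w.length then none else some (p (A w.length)) := by
  induction n with
  | zero => simp [ntRun]
  | succ n ih =>
    rw [ntRun, ih]
    rcases lt_trichotomy n w.length with hn | rfl | hn
    · simp [recordAdviceAtBlank, hn.le, Nat.succ_le_of_lt hn, List.getElem?_eq_getElem hn]
    · simp [recordAdviceAtBlank]
    · simp [recordAdviceAtBlank, hn.not_ge, (hn.trans (Nat.lt_succ_self n)).not_ge]

theorem infinitelyVisited_recordAdviceAtBlank :
    {q | {n | ntRun (recordAdviceAtBlank p) A none w n = q}.Infinite} =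
      {some (p (A w.length))} := by
  ext q
  simp only [ntRun_recordAdviceAtBlank, Set.mem_ofPred_eq, Set.mem_singleton_iff]
  constructor
  · intro hq
    by_contra hne
    refine hq ((Set.finite_Iic w.length).subset fun n hn => ?_)
    by_contra hlt
    exact hne ((if_neg hlt).symm.trans hn).symm
  · rintro rfl
    exact (Set.Ioi_infinite w.length).mono fun n hn => if_neg (not_le.mpr hn)

theorem nontermRegWith_setOf_length :
    NontermRegWith (S := S) A {w | p (A w.length) = true} := by
  refine ⟨Option Bool, inferInstance, recordAdviceAtBlank p, none, {V | some true ∈ V}, ?_⟩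
  ext w
  simp [ntAccepts, infinitelyVisited_recordAdviceAtBlank]

end Nonterminating

/-- There is an advice `A ∈ {0,1}^ω` — any `A` with `Pref A` non-regular — such
that the unary language `L = {0ⁿ : the (n+1)-st character of A is 1}` is
nonterminating regular with advice `A` but not terminating regular with
advice `A`; in particular `L_T(A) ≠ L_N(A)`. -/
theorem exists_advice_term_ne_nonterm :
    ∃ A : ℕ → Bool,
      ¬ (show Language Bool from Pref A).IsRegular ∧
      NontermRegWith (S := Unit) A {w | A w.length = true} ∧
      ¬ TermRegWith (S := Unit) A {w | A w.length = true} := by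
  obtain ⟨A, hA⟩ := exists_not_isRegular_pref
  exact ⟨A, hA, nontermRegWith_setOf_length id A, fun h => hA (isRegular_pref_of_termRegWith h)⟩
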